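/- In the formal power series ring R[[x,y]] over a commutative ℚ-algebra containing λ, with e_λ denoting the series u ↦ Σ_{m≥0}(1)_{m,λ} u^m/m! composed appropriately, the identity e_λ(e_λ(x)e_λ(y/(1+λx)) − 1) = e_λ(e_λ(x) − 1) · Σ_{k=0}^∞ (1)_{k,λ}/k! · (e_λ(x)/(1+λ(e_λ(x)−1)))^k · (e_λ(y/(1+λx)) − 1)^k holds (the sum is locally finite since e_λ(y/(1+λx)) − 1 is divisible by y). -/

import Mathlib

/-!
With `c_k = (1)_{k,λ}/k!`, the degenerate exponential satisfies
`e_λ(a + b(1 + λa)) = e_λ(a) e_λ(b)` for `a, b` without constant term: comparing coefficients of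
`a^p b^q`, this is the degenerate Vandermonde formula
`(x)_{p,λ} (x)_{q,λ} = Σ_k C(p,k) C(q,k) k! λ^k (x)_{p+q-k,λ}` at `x = 1`, proved by induction on `q`.
The theorem is the case `a = e_λ(x) - 1`, `b = e_λ(x) (e_λ(u) - 1) / (1 + λ(e_λ(x) - 1))` with
`u = y/(1 + λx)`, for which `a + b(1 + λa) = e_λ(x) e_λ(u) - 1`; and `Σ_k c_k A^k B^k = e_λ(AB)`.
-/

open MvPowerSeries

/-- The degenerate falling factorial `(x)_{n,λ}`. -/
def degFall (lam x : ℝ) (n : ℕ) : ℝ := ∏ i ∈ Finset.range n, (x - i * lam)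

/-- For a two-variable formal power series `g` with zero constant term, the
composite `e_λ(g) = Σ_{k≥0} (1)_{k,λ} g^k/k!`: the sum is locally finite, so the
coefficient at a multidegree `d` is that of the truncation to `k ≤ d 0 + d 1`. -/
noncomputable def EcompMv (lam : ℝ) (g : MvPowerSeries (Fin 2) ℝ) :
    MvPowerSeries (Fin 2) ℝ :=
  fun d => MvPowerSeries.coeff d
    (∑ k ∈ Finset.range (d 0 + d 1 + 1),
      MvPowerSeries.C (degFall lam 1 k / (Nat.factorial k)) * g ^ k)

/-- The locally finite sum `Σ_{k=0}^∞ (1)_{k,λ}/k! · A^k · B^k` (with `B`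
divisible by `y`, only `k ≤ d 0 + d 1` contribute to the coefficient at `d`). -/
noncomputable def locSum (lam : ℝ) (A B : MvPowerSeries (Fin 2) ℝ) :
    MvPowerSeries (Fin 2) ℝ :=
  fun d => MvPowerSeries.coeff d
    (∑ k ∈ Finset.range (d 0 + d 1 + 1),
      MvPowerSeries.C (degFall lam 1 k / (Nat.factorial k)) * A ^ k * B ^ k)

/-- `e_λ(x)` as an element of `ℝ[[x,y]]`. -/
noncomputable def Ex (lam : ℝ) : MvPowerSeries (Fin 2) ℝ :=
  EcompMv lam (MvPowerSeries.X (0 : Fin 2))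

/-- `e_λ(y/(1+λx))` as an element of `ℝ[[x,y]]`. -/
noncomputable def Eu (lam : ℝ) : MvPowerSeries (Fin 2) ℝ :=
  EcompMv lam (MvPowerSeries.X (1 : Fin 2) *
    (1 + MvPowerSeries.C lam * MvPowerSeries.X (0 : Fin 2))⁻¹)

open Finset
open scoped Nat

lemma degFall_zero (lam x : ℝ) : degFall lam x 0 = 1 := prod_range_zero _

lemma degFall_succ (lam x : ℝ) (n : ℕ) :
    degFall lam x (n + 1) = degFall lam x n * (x - n * lam) :=
  prod_range_succ _ _

-- `x - qλ = (x - (p + q - k)λ) + (p - k)λ`, and `C(p,k) (p - k) = C(p,k+1) (k + 1)`.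
lemma choose_mul_factorial_mul_degFall_mul_sub (lam x : ℝ) {p q k : ℕ} (hk : k ≤ q) :
    (p.choose k * k ! * lam ^ k : ℝ) * degFall lam x (p + q - k) * (x - q * lam) =
      p.choose k * k ! * lam ^ k * degFall lam x (p + (q + 1) - k) +
        p.choose (k + 1) * (k + 1)! * lam ^ (k + 1) * degFall lam x (p + q - k) := by
  rw [show p + (q + 1) - k = p + q - k + 1 by omega, degFall_succ]
  rcases le_or_gt k p with hkp | hpk
  · have hchoose := congrArg (Nat.cast (R := ℝ)) (Nat.choose_succ_right_eq p k)
    push_cast [Nat.cast_sub hkp] at hchoose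
    push_cast [Nat.factorial_succ, Nat.cast_sub (show k ≤ p + q by omega)]
    linear_combination (-k ! * lam ^ (k + 1) * degFall lam x (p + q - k)) * hchoose
  · simp [Nat.choose_eq_zero_of_lt hpk, Nat.choose_eq_zero_of_lt (Nat.lt_succ_of_lt hpk)]

theorem degFall_mul_degFall (lam x : ℝ) (p q : ℕ) :
    degFall lam x p * degFall lam x q = ∑ k ∈ range (q + 1),
      (p.choose k * q.choose k * k ! * lam ^ k : ℝ) * degFall lam x (p + q - k) := by
  induction q with
  | zero => simp [degFall_zero]
  | succ q ih =>
    have hsub : ∀ k, p + (q + 1) - (k + 1) = p + q - k := fun k => by omega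
    have hshift : ∑ k ∈ range (q + 1),
        (p.choose k * q.choose k * k ! * lam ^ k : ℝ) * degFall lam x (p + (q + 1) - k) =
        degFall lam x (p + (q + 1)) + ∑ k ∈ range (q + 1),
          (p.choose (k + 1) * q.choose (k + 1) * (k + 1)! * lam ^ (k + 1) : ℝ) *
            degFall lam x (p + q - k) := by
      have h := sum_range_succ (fun k => (p.choose k * q.choose k * k ! * lam ^ k : ℝ) *
        degFall lam x (p + (q + 1) - k)) (q + 1)
      rw [sum_range_succ', Nat.choose_succ_self] at h
      simpa [hsub, add_comm] using h.symm
    calc degFall lam x p * degFall lam x (q + 1)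
        = ∑ k ∈ range (q + 1), q.choose k *
            ((p.choose k * k ! * lam ^ k : ℝ) * degFall lam x (p + q - k) * (x - q * lam)) := by
          rw [degFall_succ, ← mul_assoc, ih, sum_mul]
          exact sum_congr rfl fun k _ => by ring
      _ = ∑ k ∈ range (q + 1),
            ((p.choose k * q.choose k * k ! * lam ^ k : ℝ) * degFall lam x (p + (q + 1) - k) +
              p.choose (k + 1) * q.choose k * (k + 1)! * lam ^ (k + 1) *
                degFall lam x (p + q - k)) :=
          sum_congr rfl fun k hk => by
            rw [choose_mul_factorial_mul_degFall_mul_sub lam x (mem_range_succ_iff.mp hk)]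
            ring
      _ = _ := by
          rw [sum_range_succ' _ (q + 1), sum_add_distrib, hshift]
          simp only [Nat.choose_succ_succ', Nat.cast_add, mul_add, add_mul, sum_add_distrib, hsub,
            Nat.choose_zero_right, Nat.cast_one, mul_one, Nat.factorial_zero, pow_zero, tsub_zero,
            one_mul]
          ring

-- The coefficients `(1)_{k,λ}/k!` of `e_λ`.
noncomputable def degExpCoeff (lam : ℝ) (k : ℕ) : ℝ := degFall lam 1 k / k !

lemma degExpCoeff_mul_degExpCoeff (lam : ℝ) (p q : ℕ) :
    degExpCoeff lam p * degExpCoeff lam q = ∑ j ∈ range (q + 1),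
      degExpCoeff lam (p + q - j) * (p + q - j).choose q * q.choose j * lam ^ j := by
  unfold degExpCoeff
  rw [div_mul_div_comm, degFall_mul_degFall, sum_div]
  refine sum_congr rfl fun j hj => ?_
  have hjq := mem_range_succ_iff.mp hj
  rcases le_or_gt j p with hjp | hpj
  · rw [Nat.cast_choose ℝ hjp, Nat.cast_choose ℝ hjq,
      Nat.cast_choose ℝ (show q ≤ p + q - j by omega), show p + q - j - q = p - j by omega]
    field_simp
  · simp [Nat.choose_eq_zero_of_lt hpj, Nat.choose_eq_zero_of_lt (show p + q - j < q by omega)]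

-- `w p q` stands for the coefficient of `a^p b^q`, which vanishes in total degree `> N`; the two sides
-- are matched through `p = n - q + j`.
lemma sum_degExpCoeff_choose_eq (lam : ℝ) {N : ℕ} (w : ℕ → ℕ → ℝ)
    (hw : ∀ p q, N < p + q → w p q = 0) :
    ∑ n ∈ range (N + 1), ∑ q ∈ range (n + 1), ∑ j ∈ range (q + 1),
        degExpCoeff lam n * n.choose q * q.choose j * lam ^ j * w (n - q + j) q =
      ∑ p ∈ range (N + 1), ∑ q ∈ range (N + 1),
        degExpCoeff lam p * degExpCoeff lam q * w p q := by
  simp_rw [degExpCoeff_mul_degExpCoeff, sum_mul]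
  rw [sum_sigma', sum_sigma', sum_sigma', sum_sigma']
  refine sum_bij_ne_zero (fun x _ _ => ⟨⟨x.1.1 - x.1.2 + x.2, x.1.2⟩, x.2⟩) ?_ ?_ ?_ ?_
  · rintro ⟨⟨n, q⟩, j⟩ hx -
    simp only [mem_sigma, mem_range] at hx ⊢
    omega
  · rintro ⟨⟨n, q⟩, j⟩ hx - ⟨⟨n', q'⟩, j'⟩ hx' -
    simp only [mem_sigma, mem_range, Sigma.mk.injEq, heq_eq_eq] at hx hx' ⊢
    omega
  · rintro ⟨⟨p, q⟩, j⟩ hy hne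
    simp only [mem_sigma, mem_range] at hy
    have hjp : j ≤ p := by
      by_contra! h
      simp [Nat.choose_eq_zero_of_lt (show p + q - j < q by omega)] at hne
    have hpq : p + q ≤ N := by
      by_contra! h
      simp [hw p q h] at hne
    refine ⟨⟨⟨p + q - j, q⟩, j⟩, ?_, ?_, ?_⟩
    · simp only [mem_sigma, mem_range]; omega
    · simpa only [show p + q - j - q + j = p by omega] using hne
    · simp only [Sigma.mk.injEq, heq_eq_eq, and_true]
      omega
  · rintro ⟨⟨n, q⟩, j⟩ hx -
    simp only [mem_sigma, mem_range] at hx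
    simp only [show n - q + j + q - j = n by omega]

lemma degree_fin_two (d : Fin 2 →₀ ℕ) : d.degree = d 0 + d 1 := by
  rw [Finsupp.degree_eq_sum, Fin.sum_univ_two]

section Order

variable {σ R : Type*} [CommSemiring R] {a b : MvPowerSeries σ R} {d : σ →₀ ℕ}

lemma coeff_pow_eq_zero_of_degree_lt (ha : constantCoeff a = 0) {n : ℕ} (h : d.degree < n) :
    coeff d (a ^ n) = 0 :=
  coeff_of_lt_order <| (Nat.cast_lt.mpr h).trans_le (le_order_pow_of_constantCoeff_eq_zero n ha)

lemma coeff_pow_mul_pow_eq_zero_of_degree_lt (ha : constantCoeff a = 0)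
    (hb : constantCoeff b = 0) {p q : ℕ} (h : d.degree < p + q) :
    coeff d (a ^ p * b ^ q) = 0 := by
  refine coeff_of_lt_order ((Nat.cast_lt.mpr h).trans_le ?_)
  calc ((p + q : ℕ) : ℕ∞) ≤ (a ^ p).order + (b ^ q).order := by
        push_cast
        exact add_le_add (le_order_pow_of_constantCoeff_eq_zero p ha)
          (le_order_pow_of_constantCoeff_eq_zero q hb)
    _ ≤ (a ^ p * b ^ q).order := le_order_mul

end Order

noncomputable def degExpPartial (lam : ℝ) (N : ℕ) (g : MvPowerSeries (Fin 2) ℝ) :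
    MvPowerSeries (Fin 2) ℝ :=
  ∑ k ∈ range (N + 1), C (degExpCoeff lam k) * g ^ k

lemma coeff_EcompMv (lam : ℝ) {a : MvPowerSeries (Fin 2) ℝ} (ha : constantCoeff a = 0)
    {d : Fin 2 →₀ ℕ} {N : ℕ} (hN : d 0 + d 1 ≤ N) :
    coeff d (EcompMv lam a) = coeff d (degExpPartial lam N a) := by
  change coeff d (degExpPartial lam (d 0 + d 1) a) = _
  simp only [degExpPartial, map_sum]
  refine sum_subset (range_subset_range.mpr (by omega)) fun k _ hk => ?_
  rw [mem_range, not_lt] at hk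
  rw [coeff_C_mul, coeff_pow_eq_zero_of_degree_lt ha (by rw [degree_fin_two]; omega), mul_zero]

lemma constantCoeff_EcompMv (lam : ℝ) (g : MvPowerSeries (Fin 2) ℝ) :
    constantCoeff (EcompMv lam g) = 1 := by
  change coeff 0 (degExpPartial lam 0 g) = 1
  simp [degExpPartial, degExpCoeff, degFall]

lemma truncTotal_EcompMv (lam : ℝ) {a : MvPowerSeries (Fin 2) ℝ} (ha : constantCoeff a = 0)
    (N : ℕ) : truncTotal (N + 1) (EcompMv lam a) = truncTotal (N + 1) (degExpPartial lam N a) := by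
  ext d
  simp only [coeff_truncTotal_eq_ite, degree_fin_two]
  split_ifs with hd
  · exact coeff_EcompMv lam ha (by omega)
  · rfl

lemma add_mul_one_add_pow (lam : ℝ) (a b : MvPowerSeries (Fin 2) ℝ) (n : ℕ) :
    (a + b * (1 + C lam * a)) ^ n = ∑ q ∈ range (n + 1), ∑ j ∈ range (q + 1),
      C (n.choose q * q.choose j * lam ^ j : ℝ) * (a ^ (n - q + j) * b ^ q) := by
  rw [add_comm, add_pow]
  refine sum_congr rfl fun q _ => ?_
  rw [mul_pow, add_comm, add_pow, mul_sum, sum_mul, sum_mul]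
  refine sum_congr rfl fun j _ => ?_
  simp only [one_pow, mul_one, mul_pow, ← map_pow, map_mul, map_natCast, pow_add]
  ring

theorem EcompMv_add_mul_one_add (lam : ℝ) {a b : MvPowerSeries (Fin 2) ℝ}
    (ha : constantCoeff a = 0) (hb : constantCoeff b = 0) :
    EcompMv lam (a + b * (1 + C lam * a)) = EcompMv lam a * EcompMv lam b := by
  ext d
  obtain ⟨N, hN⟩ : ∃ N, d.degree < N + 1 := ⟨d.degree, lt_add_one _⟩
  have hdN : d 0 + d 1 ≤ N := by rw [degree_fin_two] at hN; omega
  rw [coeff_EcompMv lam (by simp [ha, hb]) hdN,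
    ← coeff_truncTotal_mul_truncTotal_eq_coeff_mul _ _ hN, truncTotal_EcompMv lam ha,
    truncTotal_EcompMv lam hb, coeff_truncTotal_mul_truncTotal_eq_coeff_mul _ _ hN]
  calc coeff d (degExpPartial lam N (a + b * (1 + C lam * a)))
      = ∑ n ∈ range (N + 1), ∑ q ∈ range (n + 1), ∑ j ∈ range (q + 1),
          degExpCoeff lam n * n.choose q * q.choose j * lam ^ j *
            coeff d (a ^ (n - q + j) * b ^ q) := by
        simp only [degExpPartial, add_mul_one_add_pow, mul_sum, map_sum, coeff_C_mul, mul_assoc]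
    _ = ∑ p ∈ range (N + 1), ∑ q ∈ range (N + 1),
          degExpCoeff lam p * degExpCoeff lam q * coeff d (a ^ p * b ^ q) :=
        sum_degExpCoeff_choose_eq lam (fun p q => coeff d (a ^ p * b ^ q)) fun p q h =>
          coeff_pow_mul_pow_eq_zero_of_degree_lt ha hb (by omega)
    _ = coeff d (degExpPartial lam N a * degExpPartial lam N b) := by
        simp only [degExpPartial, sum_mul_sum, map_sum]
        refine sum_congr rfl fun p _ => sum_congr rfl fun q _ => ?_
        rw [mul_mul_mul_comm, ← map_mul, coeff_C_mul]

lemma locSum_eq_EcompMv (lam : ℝ) (A B : MvPowerSeries (Fin 2) ℝ) :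
    locSum lam A B = EcompMv lam (A * B) := by
  funext d
  exact congrArg (coeff d) (sum_congr rfl fun k _ => by rw [mul_pow, mul_assoc])

/-- In `ℝ[[x,y]]`:
`e_λ(e_λ(x)e_λ(y/(1+λx)) − 1)
  = e_λ(e_λ(x) − 1) · Σ_{k=0}^∞ (1)_{k,λ}/k! (e_λ(x)/(1+λ(e_λ(x)−1)))^k (e_λ(y/(1+λx)) − 1)^k`. -/
theorem stmt15 (lam : ℝ) :
    EcompMv lam (Ex lam * Eu lam - 1) =
      EcompMv lam (Ex lam - 1) *
        locSum lam (Ex lam * (1 + MvPowerSeries.C lam * (Ex lam - 1))⁻¹)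
          (Eu lam - 1) := by
  have hEx : constantCoeff (Ex lam - 1) = 0 := by simp [Ex, constantCoeff_EcompMv]
  have hEu : constantCoeff (Eu lam - 1) = 0 := by simp [Eu, constantCoeff_EcompMv]
  have hunit : (1 + C lam * (Ex lam - 1)) * (1 + C lam * (Ex lam - 1))⁻¹ = 1 :=
    MvPowerSeries.mul_inv_cancel _ (by simp [hEx])
  have hsplit : Ex lam * Eu lam - 1 = (Ex lam - 1) +
      Ex lam * (1 + C lam * (Ex lam - 1))⁻¹ * (Eu lam - 1) * (1 + C lam * (Ex lam - 1)) := by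
    linear_combination (-(Ex lam * (Eu lam - 1))) * hunit
  rw [locSum_eq_EcompMv, hsplit, EcompMv_add_mul_one_add lam hEx (by simp [hEu])]
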